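/- Let α ∈ (0,1] and β ∈ [1,∞) satisfy hypothesis (H3), and let S ⊂ ℝ² be a finite set whose points have pairwise distances ≥ α (equivalently, a configuration with finite energy for a potential satisfying (H1)–(H3)). If S is connected, i.e. any two points of S are joined by a chain of points of S with consecutive distances ≤ β, then the set Ω = ⋃_{x ∈ S} V_trunc(x) is a connected subset of ℝ². -/

import Mathlib

open Set Metric

noncomputable section

abbrev E2 := EuclideanSpace ℝ (Fin 2)

/-- Hypothesis (H3). -/
def H3cond (α β : ℝ) : Prop :=
  ∀ (c : E2) (T : Finset E2),
    (∀ x ∈ T, dist x c ≤ β) → (∀ x ∈ T, α ≤ dist x c) →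
    (∀ x ∈ T, ∀ y ∈ T, x ≠ y → α ≤ dist x y) → T.card ≤ 6

/-- The Voronoi cell of `x` with respect to the set `S`. -/
def vor (S : Set E2) (x : E2) : Set E2 :=
  {y | ∀ z ∈ S, z ≠ x → dist y x ≤ dist y z}

/-- The truncated Voronoi cell `V_trunc(x) = V(x) ∩ B̄₁(x)`. -/
def vtrunc (S : Set E2) (x : E2) : Set E2 :=
  vor S x ∩ closedBall x 1

/-- `S` is connected (with interaction range `β`): any two of its points are joined by a
chain of points of `S` with consecutive distances `≤ β`. -/
def ChainConnected (β : ℝ) (S : Finset E2) : Prop :=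
  ∀ x ∈ S, ∀ y ∈ S, ∃ (n : ℕ) (c : ℕ → E2),
    c 0 = x ∧ c n = y ∧ (∀ i ≤ n, c i ∈ S) ∧ ∀ i < n, dist (c (i + 1)) (c i) ≤ β

/-! Every point within distance 1 of `S` lies in the truncated cell of its nearest point of `S`,
so `Ω` is the union of the closed unit balls around the points of `S`. Hypothesis (H3) with
`α ≤ 1` forces `β < √2`, since the eight nonzero points of `{-1, 0, 1}²` are `1`-separated and lie
in the ball of radius `√2`; so consecutive points of a chain have intersecting unit balls. -/

def latticePoint (p : ℤ × ℤ) : E2 := !₂[(p.1 : ℝ), p.2]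

lemma dist_latticePoint (p q : ℤ × ℤ) :
    dist (latticePoint p) (latticePoint q) =
      √(((p.1 - q.1 : ℤ) : ℝ) ^ 2 + ((p.2 - q.2 : ℤ) : ℝ) ^ 2) := by
  simp [EuclideanSpace.dist_eq, latticePoint, Fin.sum_univ_two, Real.dist_eq, sq_abs]

lemma one_le_dist_latticePoint {p q : ℤ × ℤ} (h : p ≠ q) :
    1 ≤ dist (latticePoint p) (latticePoint q) := by
  rw [dist_latticePoint, Real.one_le_sqrt]
  have : (1 : ℤ) ≤ (p.1 - q.1) ^ 2 + (p.2 - q.2) ^ 2 := by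
    by_contra! hlt
    refine h (Prod.ext ?_ ?_) <;> rw [← sub_eq_zero] <;>
      nlinarith [sq_nonneg (p.1 - q.1), sq_nonneg (p.2 - q.2)]
  exact_mod_cast this

lemma latticePoint_injective : Function.Injective latticePoint := fun p q h => by
  by_contra hpq
  exact absurd (one_le_dist_latticePoint hpq) (by simp [h])

lemma H3cond.lt_sqrt_two {α β : ℝ} (h3 : H3cond α β) (hα : α ≤ 1) : β < √2 := by
  by_contra! hβ
  let grid : Finset (ℤ × ℤ) := (Finset.Icc (-1) 1 ×ˢ Finset.Icc (-1) 1).erase 0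
  have hcard : (grid.image latticePoint).card ≤ 6 := by
    refine h3 (latticePoint 0) _ ?_ ?_ ?_ <;> simp only [Finset.forall_mem_image]
    · intro p hp
      simp only [grid, Finset.mem_erase, Finset.mem_product, Finset.mem_Icc] at hp
      refine le_trans ?_ hβ
      rw [dist_latticePoint]
      gcongr
      have : (p.1 - 0) ^ 2 + (p.2 - 0) ^ 2 ≤ (2 : ℤ) := by nlinarith
      exact_mod_cast this
    · exact fun p hp => hα.trans (one_le_dist_latticePoint (Finset.ne_of_mem_erase hp))
    · exact fun p _ q _ hpq => hα.trans (one_le_dist_latticePoint (ne_of_apply_ne _ hpq))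
  rw [Finset.card_image_of_injective _ latticePoint_injective] at hcard
  exact absurd hcard (by decide)

lemma biUnion_vtrunc_eq_biUnion_closedBall (S : Finset E2) :
    ⋃ x ∈ (S : Set E2), vtrunc S x = ⋃ x ∈ (S : Set E2), closedBall x 1 := by
  refine subset_antisymm (iUnion₂_mono fun x _ => inter_subset_right) ?_
  simp only [iUnion_subset_iff]
  intro x hx w hw
  obtain ⟨m, hm, hmin⟩ := S.exists_min_image (dist w) ⟨x, hx⟩
  exact mem_biUnion hm ⟨fun z hz _ => hmin z hz, (hmin x hx).trans hw⟩

lemma ChainConnected.reflTransGen {β : ℝ} {S : Finset E2} (h : ChainConnected β S)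
    {x y : E2} (hx : x ∈ S) (hy : y ∈ S) :
    Relation.ReflTransGen (fun a b => a ∈ S ∧ dist b a ≤ β) x y := by
  obtain ⟨n, c, rfl, rfl, hmem, hstep⟩ := h x hx y hy
  refine Relation.ReflTransGen.lift c (p := fun a b => a ∈ S ∧ dist b a ≤ β)
    (fun i j hij => hij) 0 n (reflTransGen_of_succ_of_le _ (fun i hi => ?_) n.zero_le)
  rw [Function.onFun, Order.succ_eq_add_one]
  exact ⟨hmem i hi.2.le, hstep i hi.2⟩

theorem omega_connected_general (α β : ℝ) (hα : α ∈ Set.Ioc (0 : ℝ) 1)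
    (h3 : H3cond α β) (S : Finset E2) (hne : S.Nonempty)
    (hconn : ChainConnected β S) :
    IsConnected (⋃ x ∈ (S : Set E2), vtrunc (S : Set E2) x) := by
  have hβ : β ≤ 2 :=
    (h3.lt_sqrt_two hα.2).le.trans (Real.sqrt_le_iff.mpr ⟨by norm_num, by norm_num⟩)
  rw [biUnion_vtrunc_eq_biUnion_closedBall]
  refine IsConnected.biUnion_of_reflTransGen hne (fun x _ => isConnected_closedBall zero_le_one)
    fun x hx y hy => Relation.ReflTransGen.mono (fun a b ⟨ha, hab⟩ => ⟨?_, ha⟩) x y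
      (hconn.reflTransGen hx hy)
  rw [← not_disjoint_iff_nonempty_inter,
    disjoint_closedBall_closedBall_iff zero_le_one zero_le_one, dist_comm]
  linarith

/-- for a connected configuration with pairwise distances `≥ α`, the union
`Ω` of the truncated Voronoi cells is a connected subset of the plane. -/
theorem omega_connected (α β : ℝ) (hα : α ∈ Set.Ioc (0 : ℝ) 1) (hβ : 1 ≤ β)
    (h3 : H3cond α β) (S : Finset E2) (hne : S.Nonempty)
    (hsep : ∀ x ∈ S, ∀ y ∈ S, x ≠ y → α ≤ dist x y)
    (hconn : ChainConnected β S) :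
    IsConnected (⋃ x ∈ (S : Set E2), vtrunc (S : Set E2) x) :=
  omega_connected_general α β hα h3 S hne hconn
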